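/- (Brezis–Lieb lemma in Orlicz spaces.) Let B be a Young function satisfying t·b(t)/B(t) ≤ p⁺ for all t > 0 (where B' = b and p⁺ > 1), let Ω ⊆ ℝⁿ be a measurable set, and let f_k, f be measurable functions on Ω such that f_k → f almost everywhere, sup_k ∫_Ω B(|f_k|) dx < ∞, and ∫_Ω B(|f|) dx < ∞. Then for every bounded measurable function φ on Ω, lim_{k→∞} ( ∫_Ω B(|f_k|)·φ dx − ∫_Ω B(|f−f_k|)·φ dx ) = ∫_Ω B(|f|)·φ dx. -/

import Mathlib

open MeasureTheory Filter Set

noncomputable section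

namespace BLOrlicz

variable {b : ℝ → ℝ}

/-- extension of the density to all of `ℝ`. -/
def bb (b : ℝ → ℝ) : ℝ → ℝ := fun s => b (max s 0)

/-- the primitive. -/
def BB (b : ℝ → ℝ) : ℝ → ℝ := fun t => ∫ τ in (0:ℝ)..t, bb b τ

structure Young (b : ℝ → ℝ) : Prop where
  zero : b 0 = 0
  pos : ∀ s, 0 < s → 0 < b s
  rc : ∀ s, 0 ≤ s → ContinuousWithinAt b (Set.Ici s) s
  mono : MonotoneOn b (Set.Ioi 0)

theorem Young.bb_nonneg (hY : Young b) (s : ℝ) : 0 ≤ bb b s := by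
  rcases le_or_gt (max s 0) 0 with h | h
  · have : max s 0 = 0 := le_antisymm h (le_max_right _ _)
    simp [bb, this, hY.zero]
  · exact (hY.pos _ h).le

theorem Young.bb_mono (hY : Young b) : Monotone (bb b) := by
  intro s t hst
  rcases le_or_gt s 0 with hs | hs
  · have : max s 0 = 0 := max_eq_right hs
    simpa [bb, this, hY.zero] using hY.bb_nonneg t
  · have h1 : max s 0 = s := max_eq_left hs.le
    have h2 : max t 0 = t := max_eq_left (hs.le.trans hst)
    simpa [bb, h1, h2] using hY.mono (mem_Ioi.2 hs) (mem_Ioi.2 (hs.trans_le hst)) hst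

theorem Young.bb_meas (hY : Young b) : Measurable (bb b) := hY.bb_mono.measurable

theorem Young.bb_ii (hY : Young b) (a c : ℝ) : IntervalIntegrable (bb b) volume a c :=
  hY.bb_mono.intervalIntegrable

theorem Young.bb_rc (hY : Young b) (s : ℝ) (hs : 0 ≤ s) :
    ContinuousWithinAt (bb b) (Set.Ici s) s := by
  have : Set.EqOn (bb b) b (Set.Ici s) := by
    intro τ hτ
    have : max τ 0 = τ := max_eq_left (hs.trans hτ)
    simp [bb, this]
  exact (hY.rc s hs).congr this (this (le_refl s))

theorem Young.BB_cont (hY : Young b) : Continuous (BB b) :=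
  intervalIntegral.continuous_primitive (fun a c => hY.bb_ii a c) 0

theorem Young.BB_zero (hY : Young b) : BB b 0 = 0 := by
  simp [BB]

theorem Young.BB_mono (hY : Young b) : Monotone (BB b) := by
  intro s t hst
  have h := intervalIntegral.integral_add_adjacent_intervals (hY.bb_ii 0 s) (hY.bb_ii s t)
  have h2 : 0 ≤ ∫ τ in s..t, bb b τ :=
    intervalIntegral.integral_nonneg hst (fun u _ => hY.bb_nonneg u)
  show BB b s ≤ BB b t
  rw [BB, BB, ← h]
  linarith

theorem Young.BB_nonneg (hY : Young b) (t : ℝ) (ht : 0 ≤ t) : 0 ≤ BB b t := by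
  simpa [hY.BB_zero] using hY.BB_mono ht

theorem Young.BB_pos (hY : Young b) (t : ℝ) (ht : 0 < t) : 0 < BB b t := by
  have h := intervalIntegral.integral_add_adjacent_intervals (hY.bb_ii 0 (t/2)) (hY.bb_ii (t/2) t)
  have hmono : ∫ τ in (t/2)..t, (fun _ => bb b (t/2)) τ ≤ ∫ τ in (t/2)..t, bb b τ := by
    apply intervalIntegral.integral_mono_on (by linarith) (intervalIntegrable_const) (hY.bb_ii _ _)
    intro x hx
    exact hY.bb_mono hx.1
  rw [intervalIntegral.integral_const] at hmono
  have hbbpos : 0 < bb b (t/2) := by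
    have : max (t/2) 0 = t/2 := max_eq_left (by linarith)
    rw [bb, this]
    exact hY.pos _ (by linarith)
  have h1 : 0 ≤ BB b (t/2) := hY.BB_nonneg _ (by linarith)
  have h2 : (0:ℝ) < (t - t/2) * bb b (t/2) := by
    apply mul_pos (by linarith) hbbpos
  show 0 < BB b t
  rw [BB, ← h]
  rw [smul_eq_mul] at hmono
  have : BB b (t/2) = ∫ τ in (0:ℝ)..(t/2), bb b τ := rfl
  linarith [this ▸ h1]

theorem Young.BB_convex (hY : Young b) : ConvexOn ℝ Set.univ (BB b) := by
  apply convexOn_of_slope_mono_adjacent convex_univ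
  intro x y z _ _ hxy hyz
  have e1 := intervalIntegral.integral_add_adjacent_intervals (hY.bb_ii 0 x) (hY.bb_ii x y)
  have e2 := intervalIntegral.integral_add_adjacent_intervals (hY.bb_ii 0 y) (hY.bb_ii y z)
  have h1 : ∫ τ in x..y, bb b τ ≤ (y - x) * bb b y := by
    have := intervalIntegral.integral_mono_on hxy.le (hY.bb_ii x y) intervalIntegrable_const
      (fun u hu => hY.bb_mono hu.2)
    simpa [smul_eq_mul] using this
  have h2 : (z - y) * bb b y ≤ ∫ τ in y..z, bb b τ := by
    have := intervalIntegral.integral_mono_on hyz.le intervalIntegrable_const (hY.bb_ii y z)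
      (fun u hu => hY.bb_mono hu.1)
    simpa [smul_eq_mul] using this
  have hy1 : BB b y - BB b x = ∫ τ in x..y, bb b τ := by
    show (∫ τ in (0:ℝ)..y, bb b τ) - (∫ τ in (0:ℝ)..x, bb b τ) = _
    linarith
  have hy2 : BB b z - BB b y = ∫ τ in y..z, bb b τ := by
    show (∫ τ in (0:ℝ)..z, bb b τ) - (∫ τ in (0:ℝ)..y, bb b τ) = _
    linarith
  rw [div_le_div_iff₀ (by linarith) (by linarith), hy1, hy2]
  calc (∫ τ in x..y, bb b τ) * (z - y) ≤ ((y - x) * bb b y) * (z - y) := by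
        apply mul_le_mul_of_nonneg_right h1 (by linarith)
    _ = ((z - y) * bb b y) * (y - x) := by ring
    _ ≤ (∫ τ in y..z, bb b τ) * (y - x) := mul_le_mul_of_nonneg_right h2 (by linarith)


theorem Young.BB_hasDerivWithinAt (hY : Young b) (x : ℝ) (hx : 0 ≤ x) :
    HasDerivWithinAt (BB b) (bb b x) (Set.Ici x) x := by
  exact intervalIntegral.integral_hasDerivWithinAt_right (hY.bb_ii 0 x)
    (s := Set.Ici x) (t := Set.Ioi x)
    hY.bb_meas.stronglyMeasurable.stronglyMeasurableAtFilter
    ((hY.bb_rc x hx).mono Set.Ioi_subset_Ici_self)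

/-- Homogeneity: `BB (l*t) ≤ l^pp * BB t` for `l ≥ 1`, `t ≥ 0`. -/
theorem Young.BB_homog (hY : Young b) {pp : ℝ} (hpp : 1 < pp)
    (hgr : ∀ t, 0 < t → t * bb b t ≤ pp * BB b t)
    {l t : ℝ} (hl : 1 ≤ l) (ht : 0 ≤ t) :
    BB b (l * t) ≤ l ^ pp * BB b t := by
  rcases eq_or_lt_of_le ht with h0 | ht
  · rw [← h0, mul_zero]
    rw [hY.BB_zero]
    simp [hY.BB_zero]
  -- work with H x = BB x * x ^ (-pp) on [t, l*t]
  set H : ℝ → ℝ := fun x => BB b x * x ^ (-pp) with hH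
  set H' : ℝ → ℝ := fun x => bb b x * x ^ (-pp) + BB b x * (-pp * x ^ (-pp - 1)) with hH'
  have hlt : t ≤ l * t := le_mul_of_one_le_left ht.le hl
  have hcont : ContinuousOn H (Set.Icc t (l * t)) := by
    intro x hx
    have hx0 : 0 < x := lt_of_lt_of_le ht hx.1
    exact ((hY.BB_cont.continuousAt).mul
      (Real.continuousAt_rpow_const x (-pp) (Or.inl hx0.ne'))).continuousWithinAt
  have hderiv : ∀ x ∈ Set.Ico t (l * t), HasDerivWithinAt H (H' x) (Set.Ici x) x := by
    intro x hx
    have hx0 : 0 < x := lt_of_lt_of_le ht hx.1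
    have h1 := hY.BB_hasDerivWithinAt x hx0.le
    have h2 : HasDerivAt (fun y : ℝ => y ^ (-pp)) (-pp * x ^ (-pp - 1)) x :=
      Real.hasDerivAt_rpow_const (Or.inl hx0.ne')
    exact h1.mul (h2.hasDerivWithinAt)
  have hbound : ∀ x ∈ Set.Ico t (l * t), H' x ≤ 0 := by
    intro x hx
    have hx0 : 0 < x := lt_of_lt_of_le ht hx.1
    have key : x * bb b x ≤ pp * BB b x := hgr x hx0
    have hx1 : (0:ℝ) < x ^ (-pp - 1) := Real.rpow_pos_of_pos hx0 _
    have hsplit : x ^ (-pp) = x * x ^ (-pp - 1) := by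
      rw [← Real.rpow_one_add' hx0.le (by intro h; nlinarith)]
      ring_nf
    have : H' x = (x * bb b x - pp * BB b x) * x ^ (-pp - 1) := by
      rw [hH']
      simp only
      rw [hsplit]
      ring
    rw [this]
    exact mul_nonpos_of_nonpos_of_nonneg (by linarith) hx1.le
  have hfin := image_le_of_deriv_right_le_deriv_boundary (B := fun _ => H t)
    (B' := fun _ => 0) hcont hderiv (le_refl (H t)) continuousOn_const
    (fun x _ => hasDerivWithinAt_const x _ (H t)) (fun x hx => hbound x hx)
  have hres : H (l * t) ≤ H t := hfin (Set.right_mem_Icc.2 hlt)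
  -- unfold
  have hlt0 : 0 < l * t := lt_of_lt_of_le ht hlt
  have hpow : (0:ℝ) < (l * t) ^ pp := Real.rpow_pos_of_pos hlt0 _
  have h1 : BB b (l * t) * (l * t) ^ (-pp) * (l * t) ^ pp ≤ BB b t * t ^ (-pp) * (l * t) ^ pp :=
    mul_le_mul_of_nonneg_right hres hpow.le
  have hinv : (l * t) ^ (-pp) * (l * t) ^ pp = 1 := by
    rw [← Real.rpow_add hlt0]; simp
  have hmul : (l * t) ^ pp = l ^ pp * t ^ pp := Real.mul_rpow (by linarith) ht.le
  have htinv : t ^ (-pp) * t ^ pp = 1 := by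
    rw [← Real.rpow_add ht]; simp
  calc BB b (l * t) = BB b (l * t) * ((l * t) ^ (-pp) * (l * t) ^ pp) := by rw [hinv, mul_one]
    _ = BB b (l * t) * (l * t) ^ (-pp) * (l * t) ^ pp := by ring
    _ ≤ BB b t * t ^ (-pp) * (l * t) ^ pp := h1
    _ = l ^ pp * BB b t * (t ^ (-pp) * t ^ pp) := by rw [hmul]; ring
    _ = l ^ pp * BB b t := by rw [htinv, mul_one]


theorem Young.eps_ineq (hY : Young b) {pp : ℝ} (hpp : 1 < pp)
    (hgr : ∀ t, 0 < t → t * bb b t ≤ pp * BB b t)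
    {ε : ℝ} (hε : 0 < ε) :
    ∃ C : ℝ, 0 ≤ C ∧ ∀ u v : ℝ, BB b |u + v| ≤ (1 + ε) * BB b |u| + C * BB b |v| := by
  have hpp0 : (0:ℝ) < pp := by linarith
  set θ : ℝ := min (1/2) (ε / ((1 + ε) * pp)) with hθdef
  have hθpos : 0 < θ := lt_min (by norm_num) (div_pos hε (by positivity))
  have hθhalf : θ ≤ 1/2 := min_le_left _ _
  have hθ1 : θ < 1 := by linarith
  have ha0 : (0:ℝ) < 1 - θ := by linarith
  have ha1 : 1 - θ ≤ 1 := by linarith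
  -- Bernoulli : 1 - pp * θ ≤ (1-θ)^pp
  have hbern : 1 - pp * θ ≤ (1 - θ) ^ pp := by
    have := one_add_mul_self_le_rpow_one_add (s := -θ) (by linarith) (p := pp) hpp.le
    have h1 : 1 + pp * (-θ) = 1 - pp * θ := by ring
    have h2 : 1 + (-θ) = 1 - θ := by ring
    rwa [h1, h2] at this
  have hθsmall : pp * θ ≤ ε / (1 + ε) := by
    have h1 : θ ≤ ε / ((1 + ε) * pp) := min_le_right _ _
    rw [div_mul_eq_div_div] at h1
    calc pp * θ ≤ pp * (ε / (1 + ε) / pp) := by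
          apply mul_le_mul_of_nonneg_left h1 hpp0.le
      _ = ε / (1 + ε) := by field_simp
  have hapow : (1:ℝ) / (1 + ε) ≤ (1 - θ) ^ pp := by
    have : (1:ℝ) / (1 + ε) ≤ 1 - ε / (1 + ε) := by
      rw [sub_div' (by positivity : (1:ℝ) + ε ≠ 0)]
      apply div_le_div_of_nonneg_right _ (by positivity)
      · linarith
    linarith
  have hapowpos : (0:ℝ) < (1 - θ) ^ pp := Real.rpow_pos_of_pos ha0 _
  have hcoef1 : (1 - θ) * ((1 - θ)⁻¹) ^ pp ≤ 1 + ε := by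
    rw [Real.inv_rpow ha0.le, mul_comm, inv_mul_eq_div, div_le_iff₀ hapowpos]
    have : (1:ℝ) ≤ (1 + ε) * (1 - θ) ^ pp := by
      calc (1:ℝ) = (1 + ε) * (1 / (1 + ε)) := by field_simp
        _ ≤ (1 + ε) * (1 - θ) ^ pp := mul_le_mul_of_nonneg_left hapow (by positivity)
    linarith
  refine ⟨θ * (θ⁻¹) ^ pp, by positivity, ?_⟩
  intro u v
  have habs : |u + v| ≤ |u| + |v| := abs_add_le u v
  have h1 : BB b |u + v| ≤ BB b (|u| + |v|) := hY.BB_mono habs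
  have hcvx := hY.BB_convex.2 (Set.mem_univ (|u| / (1 - θ))) (Set.mem_univ (|v| / θ))
    (show (0:ℝ) ≤ 1 - θ by linarith) (show (0:ℝ) ≤ θ from hθpos.le)
    (show (1 - θ) + θ = 1 by ring)
  have hcomb : (1 - θ) • (|u| / (1 - θ)) + θ • (|v| / θ) = |u| + |v| := by
    rw [smul_eq_mul, smul_eq_mul]
    field_simp
  rw [hcomb] at hcvx
  have h2 : BB b (|u| / (1 - θ)) ≤ ((1 - θ)⁻¹) ^ pp * BB b |u| := by
    have := hY.BB_homog hpp hgr (l := (1 - θ)⁻¹) (t := |u|)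
      (by rw [le_inv_comm₀ one_pos ha0]; simpa using ha1) (abs_nonneg u)
    rwa [inv_mul_eq_div] at this
  have h3 : BB b (|v| / θ) ≤ (θ⁻¹) ^ pp * BB b |v| := by
    have := hY.BB_homog hpp hgr (l := θ⁻¹) (t := |v|)
      (by rw [le_inv_comm₀ one_pos hθpos]; simp; linarith) (abs_nonneg v)
    rwa [inv_mul_eq_div] at this
  have hBu : 0 ≤ BB b |u| := hY.BB_nonneg _ (abs_nonneg u)
  have hBv : 0 ≤ BB b |v| := hY.BB_nonneg _ (abs_nonneg v)
  calc BB b |u + v| ≤ (1 - θ) • BB b (|u| / (1 - θ)) + θ • BB b (|v| / θ) :=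
        h1.trans hcvx
    _ = (1 - θ) * BB b (|u| / (1 - θ)) + θ * BB b (|v| / θ) := by
        rw [smul_eq_mul, smul_eq_mul]
    _ ≤ (1 - θ) * (((1 - θ)⁻¹) ^ pp * BB b |u|) + θ * ((θ⁻¹) ^ pp * BB b |v|) := by
        apply add_le_add
        · exact mul_le_mul_of_nonneg_left h2 ha0.le
        · exact mul_le_mul_of_nonneg_left h3 hθpos.le
    _ = ((1 - θ) * ((1 - θ)⁻¹) ^ pp) * BB b |u| + (θ * (θ⁻¹) ^ pp) * BB b |v| := by ring
    _ ≤ (1 + ε) * BB b |u| + (θ * (θ⁻¹) ^ pp) * BB b |v| := by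
        apply add_le_add_left
        exact mul_le_mul_of_nonneg_right hcoef1 hBu


end BLOrlicz

/-- `B` is a Young function with density `b`. -/
def IsYoungPair (b B : ℝ → ℝ) : Prop :=
  b 0 = 0 ∧ (∀ s, 0 < s → 0 < b s) ∧
  (∀ s, 0 ≤ s → ContinuousWithinAt b (Set.Ici s) s) ∧
  MonotoneOn b (Set.Ioi 0) ∧
  ∀ t, 0 ≤ t → B t = ∫ τ in (0:ℝ)..t, b τ

/-- Lemma 3.4: the Brezis–Lieb lemma in the Orlicz setting. -/
theorem brezis_lieb_orlicz {n : ℕ} (b B : ℝ → ℝ) (pp : ℝ) (hpp : 1 < pp)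
    (hB : IsYoungPair b B)
    (hgrowth : ∀ t, 0 < t → t * b t / B t ≤ pp)
    (Ω : Set (Fin n → ℝ)) (hΩ : MeasurableSet Ω)
    (f : ℕ → (Fin n → ℝ) → ℝ) (g : (Fin n → ℝ) → ℝ)
    (hf : ∀ k, Measurable (f k)) (hg : Measurable g)
    (hae : ∀ᵐ x ∂(volume.restrict Ω),
      Filter.Tendsto (fun k => f k x) Filter.atTop (nhds (g x)))
    (hint : ∀ k, IntegrableOn (fun x => B |f k x|) Ω)
    (hbdd : ∃ C : ℝ, ∀ k, (∫ x in Ω, B |f k x|) ≤ C)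
    (hgint : IntegrableOn (fun x => B |g x|) Ω)
    (φ : (Fin n → ℝ) → ℝ) (hφm : Measurable φ)
    (hφb : ∃ Cφ : ℝ, ∀ x, |φ x| ≤ Cφ) :
    Filter.Tendsto
      (fun k => (∫ x in Ω, B (|f k x|) * φ x) - ∫ x in Ω, B (|g x - f k x|) * φ x)
      Filter.atTop (nhds (∫ x in Ω, B (|g x|) * φ x)) := by
  classical
  obtain ⟨hb0, hbpos, hbrc, hbmono, hBint⟩ := hB
  have hY : BLOrlicz.Young b := ⟨hb0, hbpos, hbrc, hbmono⟩
  set N := BLOrlicz.BB b with hNdef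
  -- the primitive agrees with B on nonneg reals
  have hEq : ∀ t : ℝ, 0 ≤ t → B t = N t := by
    intro t ht
    rw [hBint t ht]
    apply intervalIntegral.integral_congr
    intro τ hτ
    rw [Set.uIcc_of_le ht] at hτ
    simp [BLOrlicz.bb, max_eq_left hτ.1]
  have hgr : ∀ t, 0 < t → t * BLOrlicz.bb b t ≤ pp * N t := by
    intro t ht
    have hpos : 0 < N t := hY.BB_pos t ht
    have h1 := hgrowth t ht
    rw [hEq t ht.le] at h1
    have hbb : BLOrlicz.bb b t = b t := by simp [BLOrlicz.bb, max_eq_left ht.le]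
    rw [hbb]
    exact (div_le_iff₀ hpos).1 h1
  have hcont : Continuous N := hY.BB_cont
  have hNm : Measurable N := hcont.measurable
  have hN0 : N 0 = 0 := hY.BB_zero
  set μ := volume.restrict Ω with hμdef
  set I : ℕ → (Fin n → ℝ) → ℝ := fun k x => N |f k x| with hIdef
  set D : ℕ → (Fin n → ℝ) → ℝ := fun k x => N |g x - f k x| with hDdef
  set J : (Fin n → ℝ) → ℝ := fun x => N |g x| with hJdef
  have hIm : ∀ k, Measurable (I k) := fun k => hNm.comp ((hf k).abs)
  have hDm : ∀ k, Measurable (D k) := fun k => hNm.comp ((hg.sub (hf k)).abs)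
  have hJm : Measurable J := hNm.comp hg.abs
  have hInn : ∀ k x, 0 ≤ I k x := fun k x => hY.BB_nonneg _ (abs_nonneg _)
  have hDnn : ∀ k x, 0 ≤ D k x := fun k x => hY.BB_nonneg _ (abs_nonneg _)
  have hJnn : ∀ x, 0 ≤ J x := fun x => hY.BB_nonneg _ (abs_nonneg _)
  have hrwf : ∀ k, (fun x => B |f k x|) = I k :=
    fun k => funext fun x => hEq _ (abs_nonneg _)
  have hrwg : (fun x => B |g x|) = J := funext fun x => hEq _ (abs_nonneg _)
  have hI : ∀ k, Integrable (I k) μ := fun k => (hrwf k) ▸ (hint k)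
  have hJint : Integrable J μ := hrwg ▸ hgint
  obtain ⟨C, hC⟩ := hbdd
  have hCI : ∀ k, (∫ x, I k x ∂μ) ≤ C := fun k => (hrwf k) ▸ (hC k)
  have heps : ∀ ε : ℝ, 0 < ε → ∃ C' : ℝ, 0 ≤ C' ∧
      ∀ u v : ℝ, N |u + v| ≤ (1 + ε) * N |u| + C' * N |v| :=
    fun ε hε => hY.eps_ineq hpp hgr hε
  obtain ⟨C₁, hC₁0, hC₁⟩ := heps 1 one_pos
  have hDle : ∀ k x, D k x ≤ 2 * I k x + C₁ * J x := by
    intro k x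
    have h := hC₁ (-(f k x)) (g x)
    rw [show -(f k x) + g x = g x - f k x from by ring, abs_neg] at h
    calc D k x ≤ (1 + 1) * N |f k x| + C₁ * N |g x| := h
      _ = 2 * I k x + C₁ * J x := by norm_num; rfl
  have hD : ∀ k, Integrable (D k) μ := by
    intro k
    apply Integrable.mono' (((hI k).const_mul 2).add (hJint.const_mul C₁))
      ((hDm k).aestronglyMeasurable)
    apply Filter.Eventually.of_forall
    intro x
    rw [Real.norm_eq_abs, abs_of_nonneg (hDnn k x)]
    exact hDle k x
  set M : ℝ := 2 * C + C₁ * ∫ x, J x ∂μ with hMdef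
  have hDM : ∀ k, (∫ x, D k x ∂μ) ≤ M := by
    intro k
    calc (∫ x, D k x ∂μ) ≤ ∫ x, (2 * I k x + C₁ * J x) ∂μ :=
          integral_mono (hD k) (((hI k).const_mul 2).add (hJint.const_mul C₁))
            (fun x => hDle k x)
      _ = 2 * (∫ x, I k x ∂μ) + C₁ * ∫ x, J x ∂μ := by
          rw [integral_add ((hI k).const_mul 2) (hJint.const_mul C₁),
            MeasureTheory.integral_const_mul, MeasureTheory.integral_const_mul]
      _ ≤ M := by
          rw [hMdef]
          have := hCI k
          linarith
  have hDint_nn : ∀ k, 0 ≤ ∫ x, D k x ∂μ := fun k => integral_nonneg (fun x => hDnn k x)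
  have hM0 : 0 ≤ M := le_trans (hDint_nn 0) (hDM 0)
  set h : ℕ → (Fin n → ℝ) → ℝ := fun k x => |I k x - D k x - J x| with hhdef
  have hh : ∀ k, Integrable (h k) μ := fun k => (((hI k).sub (hD k)).sub hJint).abs
  -- the key claim : ∫ h k → 0
  have key : Filter.Tendsto (fun k => ∫ x, h k x ∂μ) Filter.atTop (nhds 0) := by
    rw [tendsto_order]
    constructor
    · intro a ha
      exact Filter.Eventually.of_forall fun k =>
        lt_of_lt_of_le ha (integral_nonneg fun x => abs_nonneg _)
    · intro a ha
      set ε : ℝ := min 1 (a / (4 * (M + 1))) with hεdef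
      have hε : 0 < ε := lt_min one_pos (by positivity)
      have hε1 : ε ≤ 1 := min_le_left _ _
      obtain ⟨C', hC'0, hC'⟩ := heps ε hε
      set W : ℕ → (Fin n → ℝ) → ℝ := fun k x => max (h k x - ε * (1 + ε) * D k x) 0
        with hWdef
      have hptw1 : ∀ k x, I k x ≤ (1 + ε) * D k x + C' * J x := by
        intro k x
        have hx := hC' (f k x - g x) (g x)
        rw [show f k x - g x + g x = f k x from by ring, abs_sub_comm] at hx
        exact hx
      have hptw2 : ∀ k x, D k x ≤ (1 + ε) * I k x + C' * J x := by
        intro k x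
        have hx := hC' (-(f k x)) (g x)
        rw [show -(f k x) + g x = g x - f k x from by ring, abs_neg] at hx
        exact hx
      have hhle : ∀ k x, h k x ≤ ε * (1 + ε) * D k x + ((1 + ε) * C' + 1) * J x := by
        intro k x
        have h1 := hptw1 k x
        have h2 := hptw2 k x
        have h3 := mul_le_mul_of_nonneg_left h1 hε.le
        have hJ := hJnn x
        have hDx := hDnn k x
        have hIx := hInn k x
        rw [hhdef]
        simp only
        rw [abs_le]
        constructor
        · nlinarith
        · nlinarith
      have hWle : ∀ k x, W k x ≤ ((1 + ε) * C' + 1) * J x := by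
        intro k x
        apply max_le
        · have := hhle k x
          have := hDnn k x
          nlinarith [hε.le]
        · exact mul_nonneg (by positivity) (hJnn x)
      have hWm : ∀ k, AEStronglyMeasurable (W k) μ := by
        intro k
        apply Measurable.aestronglyMeasurable
        exact ((((hIm k).sub (hDm k)).sub hJm).abs.sub
          ((measurable_const.mul (hDm k)))).max measurable_const
      have hWtend : ∀ᵐ x ∂μ, Filter.Tendsto (fun k => W k x) Filter.atTop (nhds 0) := by
        filter_upwards [hae] with x hx
        have hDt : Filter.Tendsto (fun k => D k x) Filter.atTop (nhds 0) := by
          have h1 : Filter.Tendsto (fun k => g x - f k x) Filter.atTop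
              (nhds (g x - g x)) := Filter.Tendsto.sub tendsto_const_nhds hx
          rw [sub_self] at h1
          have h2 := (continuous_abs.tendsto 0).comp h1
          have h3 := (hcont.tendsto (|0| : ℝ)).comp h2
          simp only [abs_zero, hN0] at h3
          exact h3
        have hIt : Filter.Tendsto (fun k => I k x) Filter.atTop (nhds (J x)) := by
          have h2 := (continuous_abs.tendsto (g x)).comp hx
          exact (hcont.tendsto (|g x|)).comp h2
        have hht : Filter.Tendsto (fun k => h k x) Filter.atTop (nhds 0) := by
          have := ((hIt.sub hDt).sub tendsto_const_nhds (b := J x)).abs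
          simpa [hhdef] using this
        have hz : Filter.Tendsto (fun _ : ℕ => (0:ℝ)) Filter.atTop (nhds 0) :=
          tendsto_const_nhds
        have := (hht.sub (hDt.const_mul (ε * (1 + ε)))).max hz
        simpa using this
      have hbound_int : Integrable (fun x => ((1 + ε) * C' + 1) * J x) μ :=
        hJint.const_mul _
      have hWDCT := tendsto_integral_of_dominated_convergence
        (F := W) (f := fun _ => (0:ℝ)) (bound := fun x => ((1 + ε) * C' + 1) * J x)
        hWm hbound_int
        (fun k => Filter.Eventually.of_forall fun x => by
          rw [Real.norm_eq_abs, abs_of_nonneg (le_max_right _ _)]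
          exact hWle k x)
        hWtend
      rw [MeasureTheory.integral_zero] at hWDCT
      have hWev : ∀ᶠ k in Filter.atTop, (∫ x, W k x ∂μ) < a / 2 := by
        have : (0:ℝ) < a / 2 := by linarith
        exact hWDCT.eventually_lt_const this
      filter_upwards [hWev] with k hk
      have hWint : Integrable (W k) μ := by
        apply Integrable.mono' hbound_int (hWm k)
        apply Filter.Eventually.of_forall
        intro x
        rw [Real.norm_eq_abs, abs_of_nonneg (le_max_right _ _)]
        exact hWle k x
      have hhW : (∫ x, h k x ∂μ) ≤ (∫ x, W k x ∂μ) + ε * (1 + ε) * ∫ x, D k x ∂μ := by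
        calc (∫ x, h k x ∂μ) ≤ ∫ x, (W k x + ε * (1 + ε) * D k x) ∂μ := by
              apply integral_mono (hh k) (hWint.add ((hD k).const_mul _))
              intro x
              have := le_max_left (h k x - ε * (1 + ε) * D k x) 0
              simp only [Pi.add_apply]
              rw [hWdef]
              simp only
              linarith
          _ = (∫ x, W k x ∂μ) + ε * (1 + ε) * ∫ x, D k x ∂μ := by
              rw [integral_add hWint ((hD k).const_mul _), MeasureTheory.integral_const_mul]
      have he2 : ε * (1 + ε) * (∫ x, D k x ∂μ) ≤ a / 2 := by
        have hε2 : ε ≤ a / (4 * (M + 1)) := min_le_right _ _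
        rw [le_div_iff₀ (by positivity)] at hε2
        have hDk := hDM k
        have hDk0 := hDint_nn k
        have e1 : ε * (1 + ε) * (∫ x, D k x ∂μ) ≤ ε * (1 + ε) * M :=
          mul_le_mul_of_nonneg_left hDk (by positivity)
        have e2 : ε * (1 + ε) * M ≤ ε * 2 * M := by nlinarith [mul_nonneg hε.le hM0]
        have e3 : ε * 2 * M ≤ a / 2 := by nlinarith [hε.le, hM0]
        linarith
      linarith
  -- conclusion
  obtain ⟨Cφ, hφ⟩ := hφb
  set Cφ' : ℝ := max Cφ 0 with hCφdef
  have hφ' : ∀ x, |φ x| ≤ Cφ' := fun x => le_trans (hφ x) (le_max_left _ _)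
  have hCφ0 : 0 ≤ Cφ' := le_max_right _ _
  have hmul_int : ∀ (u : (Fin n → ℝ) → ℝ), Integrable u μ → Measurable u →
      (∀ x, 0 ≤ u x) → Integrable (fun x => u x * φ x) μ := by
    intro u hu hum hunn
    apply Integrable.mono' (hu.const_mul Cφ') ((hum.mul hφm).aestronglyMeasurable)
    apply Filter.Eventually.of_forall
    intro x
    simp only [Real.norm_eq_abs, Pi.mul_apply, abs_mul]
    calc |u x| * |φ x| ≤ |u x| * Cφ' := mul_le_mul_of_nonneg_left (hφ' x) (abs_nonneg _)
      _ = Cφ' * u x := by rw [abs_of_nonneg (hunn x)]; ring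
  have hIφ : ∀ k, Integrable (fun x => I k x * φ x) μ :=
    fun k => hmul_int _ (hI k) (hIm k) (hInn k)
  have hDφ : ∀ k, Integrable (fun x => D k x * φ x) μ :=
    fun k => hmul_int _ (hD k) (hDm k) (hDnn k)
  have hJφ : Integrable (fun x => J x * φ x) μ := hmul_int _ hJint hJm hJnn
  have hbnd : ∀ k, |(∫ x, I k x * φ x ∂μ) - (∫ x, D k x * φ x ∂μ) - ∫ x, J x * φ x ∂μ|
      ≤ Cφ' * ∫ x, h k x ∂μ := by
    intro k
    have hu : Integrable (fun x => (I k x - D k x - J x) * φ x) μ := by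
      apply Integrable.congr (((hIφ k).sub (hDφ k)).sub hJφ)
      apply Filter.Eventually.of_forall
      intro x
      simp only [Pi.sub_apply]
      ring
    have he : (∫ x, I k x * φ x ∂μ) - (∫ x, D k x * φ x ∂μ) - (∫ x, J x * φ x ∂μ)
        = ∫ x, (I k x - D k x - J x) * φ x ∂μ := by
      have e1 : (∫ x, (I k x * φ x - D k x * φ x) ∂μ)
          = (∫ x, I k x * φ x ∂μ) - ∫ x, D k x * φ x ∂μ := integral_sub (hIφ k) (hDφ k)
      have hsub1 : Integrable (fun x => I k x * φ x - D k x * φ x) μ :=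
        (hIφ k).sub (hDφ k)
      have e2 : (∫ x, (I k x * φ x - D k x * φ x - J x * φ x) ∂μ)
          = (∫ x, (I k x * φ x - D k x * φ x) ∂μ) - ∫ x, J x * φ x ∂μ :=
        integral_sub hsub1 hJφ
      have e3 : (∫ x, (I k x - D k x - J x) * φ x ∂μ)
          = ∫ x, (I k x * φ x - D k x * φ x - J x * φ x) ∂μ :=
        integral_congr_ae (Filter.Eventually.of_forall fun x => by ring)
      rw [e3, e2, e1]
    rw [he]
    have habs : Integrable (fun x => |I k x - D k x - J x| * |φ x|) μ :=
      hu.abs.congr (Filter.Eventually.of_forall fun x => abs_mul _ _)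
    calc |∫ x, (I k x - D k x - J x) * φ x ∂μ|
        ≤ ∫ x, |I k x - D k x - J x| * |φ x| ∂μ := by
          simpa [Real.norm_eq_abs, abs_mul] using norm_integral_le_integral_norm
            (fun x => (I k x - D k x - J x) * φ x) (μ := μ)
      _ ≤ ∫ x, Cφ' * h k x ∂μ := by
          apply integral_mono habs ((hh k).const_mul Cφ')
          intro x
          show |I k x - D k x - J x| * |φ x| ≤ Cφ' * h k x
          calc |I k x - D k x - J x| * |φ x| ≤ |I k x - D k x - J x| * Cφ' :=
                mul_le_mul_of_nonneg_left (hφ' x) (abs_nonneg _)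
            _ = Cφ' * h k x := by rw [hhdef]; ring
      _ = Cφ' * ∫ x, h k x ∂μ := MeasureTheory.integral_const_mul _ _
  have hgoal1 : Filter.Tendsto
      (fun k => (∫ x, I k x * φ x ∂μ) - (∫ x, D k x * φ x ∂μ) - ∫ x, J x * φ x ∂μ)
      Filter.atTop (nhds 0) := by
    have hnorm : ∀ k, ‖(∫ x, I k x * φ x ∂μ) - (∫ x, D k x * φ x ∂μ)
        - ∫ x, J x * φ x ∂μ‖ ≤ Cφ' * ∫ x, h k x ∂μ := fun k => by
      rw [Real.norm_eq_abs]; exact hbnd k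
    have hgz : Filter.Tendsto (fun k => Cφ' * ∫ x, h k x ∂μ) Filter.atTop (nhds 0) := by
      simpa using key.const_mul Cφ'
    exact squeeze_zero_norm hnorm hgz
  have hfinal := hgoal1.add_const (∫ x, J x * φ x ∂μ)
  rw [zero_add] at hfinal
  have hr1 : ∀ k, (∫ x in Ω, B (|f k x|) * φ x) = ∫ x, I k x * φ x ∂μ := by
    intro k
    apply integral_congr_ae
    apply Filter.Eventually.of_forall
    intro x
    show B (|f k x|) * φ x = I k x * φ x
    rw [hEq _ (abs_nonneg _)]
  have hr2 : ∀ k, (∫ x in Ω, B (|g x - f k x|) * φ x) = ∫ x, D k x * φ x ∂μ := by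
    intro k
    apply integral_congr_ae
    apply Filter.Eventually.of_forall
    intro x
    show B (|g x - f k x|) * φ x = D k x * φ x
    rw [hEq _ (abs_nonneg _)]
  have hr3 : (∫ x in Ω, B (|g x|) * φ x) = ∫ x, J x * φ x ∂μ := by
    apply integral_congr_ae
    apply Filter.Eventually.of_forall
    intro x
    show B (|g x|) * φ x = J x * φ x
    rw [hEq _ (abs_nonneg _)]
  rw [hr3]
  have hfun : (fun k => (∫ x in Ω, B (|f k x|) * φ x) - ∫ x in Ω, B (|g x - f k x|) * φ x)
      = fun k => ((∫ x, I k x * φ x ∂μ) - (∫ x, D k x * φ x ∂μ) - ∫ x, J x * φ x ∂μ)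
        + ∫ x, J x * φ x ∂μ := by
    funext k
    rw [hr1 k, hr2 k]
    ring
  rw [hfun]
  exact hfinal
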